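/- Let N be even, let G₀ be the subgroup generated by Z 1, …, Z N, and let G be obtained from G₀ by finitely many measurement-updates G ↦ Meas(G, M, ε) where each measured operator M is either Z i (1 ≤ i ≤ N) or g i = X(i−1) Z i X(i+1) (2 ≤ i ≤ N−1) and each outcome sign ε ∈ {1, −1} is arbitrary. Then there exists a partition {A_1, …, A_k} of {1, …, N} such that every block A_j consists of sites of a single parity (all odd or all even), and there exist signs ε_s ∈ {1, −1} for each s, with G equal to the subgroup generated by { ε_s · s : s ∈ ⋃_j 𝒮(A_j) }. -/

import Mathlib

/-!
Every group reached is of the following form: for a partition of the sites into blocks of one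
parity and signs `φ` on the sites and `ζ` on the blocks, it is generated by the block products
`ζ_A Z_A` and the strings `φ_p φ_q g_{p,q}` for all pairs of sites `p, q` of a block. These
generators commute and square to `1`, so when exactly one of them anticommutes with the measured
`M`, the measurement keeps the others and replaces that one by `± M`.

Measuring `Z ℓ` splits `ℓ` off its block `A`: every string at `ℓ` is `g_{ℓ,r}` times a string
avoiding `ℓ`, so `g_{ℓ,r}` is the anticommuting generator, and `Z_A` is traded for
`Z_{A \ ℓ} = Z_ℓ Z_A`. Measuring `g_i` merges the blocks `A ∋ i - 1` and `B ∋ i + 1`: after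
trading `Z_B` for `Z_{A ∪ B}`, the anticommuting generator is `Z_A`, and every string from `A`
to `B` is a product of `g_i` with strings inside `A` and `B`. Finally, the strings between
consecutive sites of a block generate all its strings, which gives the sets `𝒮(A)`.
-/

open scoped Classical
open scoped Matrix
noncomputable section
namespace QStab

/-- The space of operators (matrices) on a chain of qubits indexed by `ι`. -/
abbrev Op (ι : Type*) [Fintype ι] [DecidableEq ι] : Type _ :=
  Matrix (ι → Fin 2) (ι → Fin 2) ℂ

variable {ι : Type*} [Fintype ι] [DecidableEq ι]

/-- The Pauli `X` operator at site `i`. -/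
def PX (i : ι) : Op ι :=
  Matrix.of fun f g => if f = Function.update g i (g i + 1) then 1 else 0

/-- The Pauli `Z` operator at site `i`. -/
def PZ (i : ι) : Op ι :=
  Matrix.of fun f g => if f = g then ((-1 : ℂ)) ^ ((f i : ℕ)) else 0

/-- The (ordered) product `∏ i, (X i)^(a i)`. -/
def XProd (a : ι → Fin 2) : Op ι :=
  (Finset.univ.toList.map fun i => PX i ^ ((a i : ℕ))).prod

/-- The (ordered) product `∏ i, (Z i)^(b i)`. -/
def ZProd (b : ι → Fin 2) : Op ι :=
  (Finset.univ.toList.map fun i => PZ i ^ ((b i : ℕ))).prod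

/-- `c` is one of the allowed phases `1, −1, i, −i` of a Pauli string. -/
def IsPhase (c : ℂ) : Prop := c = 1 ∨ c = -1 ∨ c = Complex.I ∨ c = -Complex.I

/-- `M` is a Pauli string: `M = c • (∏ i, (X i)^(a i)) * (∏ i, (Z i)^(b i))`. -/
def IsPauli (M : Op ι) : Prop :=
  ∃ (c : ℂ) (a b : ι → Fin 2), IsPhase c ∧ M = c • (XProd a * ZProd b)

/-- `M` is a Pauli string acting as the identity on every site outside `A`. -/
def IsPauliSupportedOn (A : Finset ι) (M : Op ι) : Prop :=
  ∃ (c : ℂ) (a b : ι → Fin 2), IsPhase c ∧ (∀ i, i ∉ A → a i = 0 ∧ b i = 0) ∧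
    M = c • (XProd a * ZProd b)

/-- `M` is a Pauli string acting trivially (as the identity) at the site `i`. -/
def ActsTriviallyAt (i : ι) (M : Op ι) : Prop :=
  ∃ (c : ℂ) (a b : ι → Fin 2), IsPhase c ∧ a i = 0 ∧ b i = 0 ∧
    M = c • (XProd a * ZProd b)

/-- The function on all of `ι` agreeing with `f` on `A` and with `h` on `Aᶜ`. -/
def combine (A : Finset ι) (f : ↥A → Fin 2) (h : ↥(Aᶜ) → Fin 2) : ι → Fin 2 :=
  fun i => if hi : i ∈ A then f ⟨i, hi⟩ else h ⟨i, Finset.mem_compl.mpr hi⟩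

/-- The partial trace over the qubits outside `A` (the reduced density matrix on `A`). -/
def ptrace (A : Finset ι) (ρ : Op ι) : Matrix (↥A → Fin 2) (↥A → Fin 2) ℂ :=
  Matrix.of fun f g => ∑ h : ↥(Aᶜ) → Fin 2, ρ (combine A f h) (combine A g h)

/-- The rank-one projector `|ψ⟩⟨ψ|`. -/
def outer (ψ : (ι → Fin 2) → ℂ) : Op ι :=
  Matrix.of fun f g => ψ f * star (ψ g)

/-- `ψ` is a unit vector. -/
def IsUnitVec (ψ : (ι → Fin 2) → ℂ) : Prop :=
  ∑ f, Complex.normSq (ψ f) = 1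

/-- The von Neumann entropy `−Tr(ρ log ρ)` of a Hermitian matrix, computed through its
eigenvalues (with the convention `0 log 0 = 0`, and junk value `0` on non-Hermitian input). -/
def vnEntropy {n : Type*} [Fintype n] [DecidableEq n] (ρ : Matrix n n ℂ) : ℝ :=
  if h : ρ.IsHermitian then -∑ i, (h.eigenvalues i * Real.log (h.eigenvalues i)) else 0

/-- The von Neumann entanglement entropy of `ψ` in the region `A`:
`S_A(ψ) = −Tr(ρ_A log ρ_A)` where `ρ_A` is the reduced density matrix of `|ψ⟩⟨ψ|`. -/
def entEntropy (A : Finset ι) (ψ : (ι → Fin 2) → ℂ) : ℝ :=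
  vnEntropy (ptrace A (outer ψ))

/-- The product of the `s i` over the subset `T` (in increasing order of indices). -/
def subProd {N : ℕ} (s : Fin N → Op ι) (T : Finset (Fin N)) : Op ι :=
  ((T.sort (· ≤ ·)).map s).prod

/-- `{s 0, …, s (N-1)}` is an independent set of `N` Hermitian pairwise commuting Pauli
strings: products over distinct subsets are pairwise distinct and no nonempty product
equals `±I`. -/
def IndepStabs {N : ℕ} (s : Fin N → Op ι) : Prop :=
  (∀ i, IsPauli (s i)) ∧ (∀ i, (s i).IsHermitian) ∧
  (∀ i j, Commute (s i) (s j)) ∧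
  Function.Injective (subProd s) ∧
  (∀ T : Finset (Fin N), T.Nonempty → subProd s T ≠ 1 ∧ subProd s T ≠ -1)

/-- The 1-based label of the site `i : Fin N`, so that the qubits are labeled `1, …, N`. -/
def lbl {N : ℕ} (i : Fin N) : ℕ := (i : ℕ) + 1

/-- The single-qubit operator `Z p` at the site with label `p` (1-based). -/
def ZSingle (N : ℕ) (p : ℕ) : Op (Fin N) :=
  ZProd fun i => if lbl i = p then 1 else 0

/-- The string of `Z`'s at the labels `p, p+2, …, q` (sites of the parity of `p` in `[p,q]`). -/
def ZStr (N : ℕ) (p q : ℕ) : Op (Fin N) :=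
  ZProd fun i => if p ≤ lbl i ∧ lbl i ≤ q ∧ lbl i % 2 = p % 2 then 1 else 0

/-- The string operator `g_{p,q} = X p * (∏_{k=0}^{(q−p)/2−1} Z (p+2k+1)) * X q`
for labels `p < q` of the same parity.  In particular the cluster stabilizer
`g i = X (i−1) * Z i * X (i+1)` is `GStr N (i-1) (i+1)`. -/
def GStr (N : ℕ) (p q : ℕ) : Op (Fin N) :=
  (XProd fun i => if lbl i = p ∨ lbl i = q then 1 else 0) *
    ZProd fun i => if p < lbl i ∧ lbl i < q ∧ ¬(lbl i % 2 = p % 2) then 1 else 0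

/-- `G1 = ∏_{i even} Z i` (even labels). -/
def Gsym1 (N : ℕ) : Op (Fin N) := ZProd fun i => if lbl i % 2 = 0 then 1 else 0

/-- `G2 = ∏_{i odd} Z i` (odd labels). -/
def Gsym2 (N : ℕ) : Op (Fin N) := ZProd fun i => if lbl i % 2 = 1 then 1 else 0

/-- The measurement channel `𝓔_S(ρ) = Π₊ ρ Π₊ + Π₋ ρ Π₋` with `Π± = (I ± S)/2`. -/
def measChannel (S ρ : Op ι) : Op ι :=
  ((2 : ℂ)⁻¹ • (1 + S)) * ρ * ((2 : ℂ)⁻¹ • (1 + S)) +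
    ((2 : ℂ)⁻¹ • (1 - S)) * ρ * ((2 : ℂ)⁻¹ • (1 - S))

/-- Measurement-update map on stabilizer groups: if the measured Pauli `M` commutes with
every element of `G` the group is unchanged; otherwise the new group is generated by the
centralizer `C_G(M)` together with `ε • M` (where `ε` is the measurement outcome sign). -/
def Meas (G : Submonoid (Op ι)) (M : Op ι) (ε : ℂ) : Submonoid (Op ι) :=
  if ∀ g ∈ G, M * g = g * M then G
  else Submonoid.closure ({g | g ∈ G ∧ M * g = g * M} ∪ {ε • M})

/-- The isolated-SPT stabilizer set `𝒮(A)`: the string operators `g_{q_i, q_{i+1}}` between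
consecutive elements of `A`, together with the total `Z`-product `∏_{p ∈ A} Z p`. -/
def SPTstabs (N : ℕ) (A : Finset ℕ) : Set (Op (Fin N)) :=
  {m | (∃ p ∈ A, ∃ q ∈ A, p < q ∧ (∀ r ∈ A, ¬(p < r ∧ r < q)) ∧ m = GStr N p q) ∨
    m = ZProd fun i => if lbl i ∈ A then 1 else 0}

/-- The block of the partition `P` containing `x`. -/
def blockOf (P : Finset (Finset ℕ)) (x : ℕ) : Finset ℕ :=
  P.sup fun A => if x ∈ A then A else ∅

/-- Partition update for the move “measure `Z i`”: `i` is split off into its own block. -/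
def updZ (P : Finset (Finset ℕ)) (i : ℕ) : Finset (Finset ℕ) :=
  insert {i} ((P.image fun A => A.erase i).erase ∅)

/-- Partition update for the move “measure `g i`”: the blocks of `i−1` and `i+1` merge. -/
def updG (P : Finset (Finset ℕ)) (i : ℕ) : Finset (Finset ℕ) :=
  insert (blockOf P (i - 1) ∪ blockOf P (i + 1))
    ((P.erase (blockOf P (i - 1))).erase (blockOf P (i + 1)))

/-- The partition of `{1, …, N}` into singletons. -/
def startPart (N : ℕ) : Finset (Finset ℕ) := (Finset.Icc 1 N).image fun i => {i}

/-- The matrix `M`, supported on `A`, viewed as an operator on the qubits in `A` only. -/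
def restrictOp (A : Finset ι) (M : Op ι) : Matrix (↥A → Fin 2) (↥A → Fin 2) ℂ :=
  Matrix.of fun f g =>
    M (fun i => if hi : i ∈ A then f ⟨i, hi⟩ else 0)
      (fun i => if hi : i ∈ A then g ⟨i, hi⟩ else 0)


section Pauli

def sign2 (x : Fin 2) : ℤˣ := (-1) ^ (x : ℕ)

lemma sign2_add (x y : Fin 2) : sign2 (x + y) = sign2 x * sign2 y := by
  fin_cases x <;> fin_cases y <;> decide

lemma sign2_injective : Function.Injective sign2 := by decide

lemma sign2_eq_neg_of_ne {x y : Fin 2} (h : x ≠ y) : sign2 x = -sign2 y := by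
  fin_cases x <;> fin_cases y <;> first | exact absurd rfl h | decide

def pauliX (a : ι → Fin 2) : Op ι := Matrix.of fun f g => if f = g + a then 1 else 0

def pauliZ (b : ι → Fin 2) : Op ι := Matrix.diagonal fun g => ((sign2 (b ⬝ᵥ g) : ℤ) : ℂ)

def pauli (a b : ι → Fin 2) : Op ι := pauliX a * pauliZ b

lemma pauliX_zero : (pauliX 0 : Op ι) = 1 := by
  ext f g
  simp [pauliX, Matrix.one_apply]

lemma pauliZ_zero : (pauliZ 0 : Op ι) = 1 := by
  simp [pauliZ, sign2]

lemma pauliX_add (a a' : ι → Fin 2) : pauliX (a + a') = pauliX a * pauliX a' := by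
  ext f g
  rw [Matrix.mul_apply, Finset.sum_eq_single (g + a')]
  · simp [pauliX, add_assoc, add_comm a']
  · intro x _ hx
    simp [pauliX, hx]
  · simp

lemma pauliZ_add (b b' : ι → Fin 2) : pauliZ (b + b') = pauliZ b * pauliZ b' := by
  simp only [pauliZ, Matrix.diagonal_mul_diagonal, add_dotProduct, sign2_add]
  push_cast
  rfl

lemma pauli_apply (a b f g : ι → Fin 2) :
    pauli a b f g = if f = g + a then ((sign2 (b ⬝ᵥ g) : ℤ) : ℂ) else 0 := by
  simp [pauli, pauliX, pauliZ, Matrix.mul_diagonal]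

lemma pauliZ_mul_pauliX (b a : ι → Fin 2) :
    pauliZ b * pauliX a = sign2 (b ⬝ᵥ a) • pauli a b := by
  ext f g
  rw [Matrix.smul_apply, pauli_apply, Units.smul_def, zsmul_eq_mul]
  simp only [pauliZ, pauliX, Matrix.diagonal_mul, Matrix.of_apply]
  split_ifs with h
  · subst h
    rw [dotProduct_add, sign2_add]
    push_cast
    ring
  · simp

lemma pauli_zero : (pauli 0 0 : Op ι) = 1 := by
  rw [pauli, pauliX_zero, pauliZ_zero, one_mul]

lemma pauli_mul_pauli (a b a' b' : ι → Fin 2) :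
    pauli a b * pauli a' b' = sign2 (b ⬝ᵥ a') • pauli (a + a') (b + b') := by
  rw [pauli, pauli, mul_assoc, ← mul_assoc (pauliZ b), pauliZ_mul_pauliX, pauli, smul_mul_assoc,
    mul_smul_comm, mul_assoc, ← mul_assoc (pauliX a), ← pauliX_add, ← pauliZ_add, pauli]

lemma add_self_eq_zero_of_fin_two {α : Type*} (a : α → Fin 2) : a + a = 0 := by
  have h : ∀ x : Fin 2, x + x = 0 := by decide
  exact funext fun i => h (a i)

lemma pauli_mul_self (a b : ι → Fin 2) : pauli a b * pauli a b = sign2 (b ⬝ᵥ a) • 1 := by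
  rw [pauli_mul_pauli, add_self_eq_zero_of_fin_two, add_self_eq_zero_of_fin_two, pauli_zero]

lemma pauli_commute {a b a' b' : ι → Fin 2} (h : b ⬝ᵥ a' = b' ⬝ᵥ a) :
    Commute (pauli a b) (pauli a' b') := by
  rw [Commute, SemiconjBy, pauli_mul_pauli, pauli_mul_pauli, h, add_comm a, add_comm b]

lemma pauli_anticommute {a b a' b' : ι → Fin 2} (h : b ⬝ᵥ a' ≠ b' ⬝ᵥ a) :
    pauli a b * pauli a' b' = -(pauli a' b' * pauli a b) := by
  rw [pauli_mul_pauli, pauli_mul_pauli, sign2_eq_neg_of_ne h, add_comm a, add_comm b,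
    Units.neg_smul]

lemma pauli_injective {a b a' b' : ι → Fin 2} (h : pauli a b = pauli a' b') :
    a = a' ∧ b = b' := by
  have ha : a = a' := by
    have h0 := congrFun (congrFun h a) 0
    simp only [pauli_apply, zero_add, dotProduct_zero] at h0
    by_contra hne
    simp [hne] at h0
  subst ha
  refine ⟨rfl, funext fun i => ?_⟩
  have hi := congrFun (congrFun h (Pi.single i 1 + a)) (Pi.single i 1)
  simp only [pauli_apply, dotProduct_single, mul_one] at hi
  exact_mod_cast sign2_injective (Units.val_injective (Int.cast_injective hi))

lemma pauli_ne_zero (a b : ι → Fin 2) : pauli a b ≠ 0 := by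
  intro h
  have h0 := congrFun (congrFun h a) 0
  simp [pauli_apply] at h0

lemma list_prod_map_of_map_add {α A M : Type*} [AddMonoid A] [Monoid M] {F : A → M}
    (h0 : F 0 = 1) (hadd : ∀ a b, F (a + b) = F a * F b) (v : α → A) (l : List α) :
    (l.map fun i => F (v i)).prod = F (l.map v).sum := by
  induction l with
  | nil => simp [h0]
  | cons i l ih => simp [ih, hadd]

lemma PX_pow (i : ι) (x : Fin 2) : PX i ^ (x : ℕ) = pauliX (Pi.single i x) := by
  fin_cases x
  · simp [pauliX_zero]
  · ext f g
    simp only [PX, pauliX, Matrix.of_apply, Fin.mk_one, pow_one]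
    congr 2
    ext j
    by_cases hj : j = i
    · subst hj; simp
    · simp [Function.update_of_ne hj, Pi.single_eq_of_ne hj]

lemma PZ_pow (i : ι) (x : Fin 2) : PZ i ^ (x : ℕ) = pauliZ (Pi.single i x) := by
  fin_cases x
  · simp [pauliZ_zero]
  · ext f g
    simp only [PZ, pauliZ, Matrix.of_apply, Matrix.diagonal_apply, Fin.mk_one, pow_one,
      single_dotProduct, one_mul, sign2]
    split_ifs with h
    · subst h; push_cast; rfl
    · rfl

lemma XProd_eq (a : ι → Fin 2) : XProd a = pauliX a := by
  simp only [XProd, PX_pow]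
  rw [list_prod_map_of_map_add pauliX_zero pauliX_add, Finset.sum_map_toList,
    Finset.univ_sum_single]

lemma ZProd_eq (b : ι → Fin 2) : ZProd b = pauliZ b := by
  simp only [ZProd, PZ_pow]
  rw [list_prod_map_of_map_add pauliZ_zero pauliZ_add, Finset.sum_map_toList,
    Finset.univ_sum_single]

end Pauli


section Chain

variable {N : ℕ}

def ind (N : ℕ) (S : Set ℕ) : Fin N → Fin 2 := fun i => if lbl i ∈ S then 1 else 0

def between (x y : ℕ) : Set ℕ := {w | min x y < w ∧ w < max x y ∧ w % 2 ≠ x % 2}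

def stringOp (N x y : ℕ) : Op (Fin N) := pauli (ind N {x, y}) (ind N (between x y))

def blockZ (N : ℕ) (A : Finset ℕ) : Op (Fin N) := pauli 0 (ind N A)

lemma lbl_mem_Icc (i : Fin N) : lbl i ∈ Finset.Icc 1 N := by
  have := i.isLt
  simp only [lbl, Finset.mem_Icc]
  omega

lemma exists_lbl_eq {x : ℕ} (hx : x ∈ Finset.Icc 1 N) : ∃ i : Fin N, lbl i = x :=
  ⟨⟨x - 1, by grind⟩, by grind [lbl]⟩

lemma GStr_eq_stringOp {p q : ℕ} (hpq : p < q) : GStr N p q = stringOp N p q := by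
  rw [GStr, XProd_eq, ZProd_eq, stringOp, pauli]
  congr 2 <;> ext i <;> simp [ind, between, min_eq_left hpq.le, max_eq_right hpq.le]

lemma ZProd_eq_blockZ (A : Finset ℕ) :
    (ZProd fun i : Fin N => if lbl i ∈ A then 1 else 0) = blockZ N A := by
  rw [ZProd_eq, blockZ, pauli, pauliX_zero, one_mul]
  congr 1
  ext i
  simp [ind]

lemma ind_singleton_lbl (i : Fin N) : ind N {lbl i} = Pi.single i 1 := by
  ext j
  by_cases hj : j = i
  · subst hj; simp [ind]
  · simp [ind, Pi.single_eq_of_ne hj, show lbl j ≠ lbl i by simp [lbl, Fin.val_inj, hj]]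

lemma PZ_eq_blockZ (i : Fin N) : PZ i = blockZ N {lbl i} := by
  rw [blockZ, pauli, pauliX_zero, one_mul, Finset.coe_singleton, ind_singleton_lbl, ← PZ_pow i 1]
  simp

lemma ind_symmDiff (S T : Set ℕ) : ind N (symmDiff S T) = ind N S + ind N T := by
  ext i
  simp only [ind, Set.mem_symmDiff, Pi.add_apply]
  by_cases hS : lbl i ∈ S <;> by_cases hT : lbl i ∈ T <;> simp [hS, hT]

lemma ind_injOn {S T : Set ℕ} (hS : S ⊆ Set.Icc 1 N) (hT : T ⊆ Set.Icc 1 N)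
    (h : ind N S = ind N T) : S = T := by
  have key : ∀ i : Fin N, lbl i ∈ S ↔ lbl i ∈ T := fun i => by
    have := congrFun h i
    by_cases hiS : lbl i ∈ S <;> by_cases hiT : lbl i ∈ T <;> simp_all [ind]
  ext x
  constructor <;> intro hx
  · obtain ⟨i, rfl⟩ := exists_lbl_eq (by simpa using hS hx)
    exact (key i).1 hx
  · obtain ⟨i, rfl⟩ := exists_lbl_eq (by simpa using hT hx)
    exact (key i).2 hx

lemma ind_dotProduct_eq_zero {S T : Set ℕ} (h : Disjoint S T) : ind N S ⬝ᵥ ind N T = 0 := by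
  refine Finset.sum_eq_zero fun i _ => ?_
  by_cases hS : lbl i ∈ S
  · simp [ind, hS, Set.disjoint_left.1 h hS]
  · simp [ind, hS]

lemma ind_dotProduct_singleton (T : Set ℕ) {x : ℕ} (hx : x ∈ Finset.Icc 1 N) :
    ind N T ⬝ᵥ ind N {x} = if x ∈ T then 1 else 0 := by
  obtain ⟨i, rfl⟩ := exists_lbl_eq hx
  rw [ind_singleton_lbl, dotProduct_single, mul_one, ind]

lemma ind_dotProduct_pair (T : Set ℕ) {x y : ℕ} (hxy : x ≠ y) (hx : x ∈ Finset.Icc 1 N)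
    (hy : y ∈ Finset.Icc 1 N) :
    ind N T ⬝ᵥ ind N {x, y} = (if x ∈ T then 1 else 0) + (if y ∈ T then 1 else 0) := by
  have : ({x, y} : Set ℕ) = symmDiff {x} {y} := by
    ext w; simp only [Set.mem_insert_iff, Set.mem_singleton_iff, Set.mem_symmDiff]; omega
  rw [this, ind_symmDiff, dotProduct_add, ind_dotProduct_singleton T hx,
    ind_dotProduct_singleton T hy]

end Chain

section Strings

variable {N : ℕ}

lemma disjoint_pair_between {x y : ℕ} (h : x % 2 = y % 2) : Disjoint (between x y) {x, y} := by
  rw [Set.disjoint_left]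
  rintro w ⟨-, -, hw⟩ (rfl | rfl) <;> omega

lemma stringOp_comm {x y : ℕ} (h : x % 2 = y % 2) : stringOp N x y = stringOp N y x := by
  have hB : between x y = between y x := by
    ext w; simp only [between, Set.mem_ofPred_eq]; omega
  rw [stringOp, stringOp, Set.pair_comm, hB]

lemma stringOp_mul_self {x y : ℕ} (h : x % 2 = y % 2) :
    stringOp N x y * stringOp N x y = 1 := by
  rw [stringOp, pauli_mul_self, ind_dotProduct_eq_zero (disjoint_pair_between h)]
  exact one_smul _ _

lemma stringOp_mul_stringOp {x y z : ℕ} (hxy : x ≠ y) (hyz : y ≠ z) (hxz : x ≠ z)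
    (h₁ : x % 2 = y % 2) (h₂ : y % 2 = z % 2) :
    stringOp N x y * stringOp N y z = stringOp N x z := by
  have hsign : ind N (between x y) ⬝ᵥ ind N {y, z} = 0 := by
    refine ind_dotProduct_eq_zero (Set.disjoint_left.2 ?_)
    rintro w ⟨-, -, hw⟩ (rfl | rfl) <;> omega
  have hX : symmDiff ({x, y} : Set ℕ) {y, z} = {x, z} := by
    ext w; simp only [Set.mem_symmDiff, Set.mem_insert_iff, Set.mem_singleton_iff]; omega
  have hZ : symmDiff (between x y) (between y z) = between x z := by
    ext w; simp only [Set.mem_symmDiff, between, Set.mem_ofPred_eq]; omega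
  rw [stringOp, stringOp, pauli_mul_pauli, hsign, ← ind_symmDiff, ← ind_symmDiff, hX, hZ]
  exact one_smul _ _

/-- On different sublattices both signs count the ends of one string lying inside the other,
which agree mod 2 whether the strings are nested, crossing or apart; on the same sublattice both
signs are trivial. -/
lemma stringOp_commute_stringOp {x y p q : ℕ} (hxy : x ≠ y) (hpq : p ≠ q)
    (hxy₂ : x % 2 = y % 2) (hpq₂ : p % 2 = q % 2)
    (hx : x ∈ Finset.Icc 1 N) (hy : y ∈ Finset.Icc 1 N) (hp : p ∈ Finset.Icc 1 N)
    (hq : q ∈ Finset.Icc 1 N) : Commute (stringOp N x y) (stringOp N p q) := by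
  apply pauli_commute
  rw [ind_dotProduct_pair _ hpq hp hq, ind_dotProduct_pair _ hxy hx hy]
  split_ifs <;> simp only [between, Set.mem_ofPred_eq] at * <;> first | rfl | omega

lemma blockZ_commute_blockZ (A B : Finset ℕ) : Commute (blockZ N A) (blockZ N B) :=
  pauli_commute (by simp)

lemma stringOp_commute_blockZ {x y : ℕ} (A : Finset ℕ) (hxy : x ≠ y)
    (hx : x ∈ Finset.Icc 1 N) (hy : y ∈ Finset.Icc 1 N) (hA : x ∈ A ↔ y ∈ A) :
    Commute (stringOp N x y) (blockZ N A) := by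
  apply pauli_commute
  rw [dotProduct_zero, ind_dotProduct_pair _ hxy hx hy]
  by_cases hxA : x ∈ A <;> simp [hxA, ← hA]

lemma stringOp_anticommute_blockZ {x y : ℕ} (A : Finset ℕ) (hxy : x ≠ y)
    (hx : x ∈ Finset.Icc 1 N) (hy : y ∈ Finset.Icc 1 N) (hxA : x ∈ A) (hyA : y ∉ A) :
    stringOp N x y * blockZ N A = -(blockZ N A * stringOp N x y) := by
  apply pauli_anticommute
  rw [dotProduct_zero, ind_dotProduct_pair _ hxy hx hy]
  simp [hxA, hyA]

lemma blockZ_mul_blockZ (A B : Finset ℕ) :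
    blockZ N A * blockZ N B = blockZ N (symmDiff A B) := by
  rw [blockZ, blockZ, blockZ, pauli_mul_pauli, dotProduct_zero, Finset.coe_symmDiff,
    ind_symmDiff, add_zero]
  exact one_smul _ _

lemma blockZ_mul_self (A : Finset ℕ) : blockZ N A * blockZ N A = 1 := by
  rw [blockZ, pauli_mul_self, dotProduct_zero]
  exact one_smul _ _

lemma blockZ_ne_zero (N : ℕ) (A : Finset ℕ) : blockZ N A ≠ 0 := pauli_ne_zero _ _

lemma stringOp_ne_zero (N x y : ℕ) : stringOp N x y ≠ 0 := pauli_ne_zero _ _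

lemma singleton_symmDiff_of_mem {A : Finset ℕ} {ℓ : ℕ} (h : ℓ ∈ A) :
    symmDiff {ℓ} A = A.erase ℓ := by
  ext x
  by_cases hx : x = ℓ <;> simp [Finset.mem_symmDiff, hx, h]

end Strings

section Measurement

lemma mem_centralizer_singleton_iff {M : Type*} [Monoid M] {a g : M} :
    g ∈ Submonoid.centralizer {a} ↔ Commute a g := by
  simp [Submonoid.mem_centralizer_iff, Commute, SemiconjBy]

lemma closure_le_isUnit {M : Type*} [Monoid M] {S : Set M} (h : ∀ s ∈ S, s * s = 1) :
    Submonoid.closure S ≤ IsUnit.submonoid M :=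
  Submonoid.closure_le.2 fun s hs => ⟨⟨s, s, h s hs, h s hs⟩, rfl⟩

lemma closure_singleton_sup_closure_singleton_mul {M : Type*} [Monoid M] {a : M} (b : M)
    (ha : a * a = 1) :
    Submonoid.closure {a} ⊔ Submonoid.closure {b} =
      Submonoid.closure {a} ⊔ Submonoid.closure {a * b} := by
  apply le_antisymm <;> refine sup_le le_sup_left ?_ <;>
    rw [Submonoid.closure_singleton_le_iff_mem]
  · have h : a * (a * b) ∈ Submonoid.closure {a} ⊔ Submonoid.closure {a * b} :=
      mul_mem (Submonoid.mem_sup_left Submonoid.mem_closure_singleton_self)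
        (Submonoid.mem_sup_right Submonoid.mem_closure_singleton_self)
    rwa [← mul_assoc, ha, one_mul] at h
  · exact mul_mem (Submonoid.mem_sup_left Submonoid.mem_closure_singleton_self)
      (Submonoid.mem_sup_right Submonoid.mem_closure_singleton_self)

lemma exists_eq_or_eq_mul_of_mem_closure_singleton_sup {M : Type*} [Monoid M] {t : M}
    {H : Submonoid M} (ht : t * t = 1) (htH : H ≤ Submonoid.centralizer {t}) {g : M}
    (hg : g ∈ Submonoid.closure {t} ⊔ H) : ∃ h ∈ H, g = h ∨ g = h * t := by
  rw [← Submonoid.closure_eq H, ← Submonoid.closure_union] at hg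
  induction hg using Submonoid.closure_induction with
  | mem x hx =>
    rcases hx with rfl | hx
    · exact ⟨1, H.one_mem, Or.inr (one_mul x).symm⟩
    · exact ⟨x, hx, Or.inl rfl⟩
  | one => exact ⟨1, H.one_mem, Or.inl rfl⟩
  | mul x y _ _ hx hy =>
    obtain ⟨h₁, hh₁, hx⟩ := hx
    obtain ⟨h₂, hh₂, hy⟩ := hy
    have hc : t * h₂ = h₂ * t := (mem_centralizer_singleton_iff.1 (htH hh₂)).eq
    refine ⟨h₁ * h₂, mul_mem hh₁ hh₂, ?_⟩
    rcases hx with rfl | rfl <;> rcases hy with rfl | rfl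
    · exact Or.inl rfl
    · exact Or.inr (mul_assoc _ _ _).symm
    · exact Or.inr (by rw [mul_assoc, hc, ← mul_assoc])
    · exact Or.inl (by rw [mul_assoc, ← mul_assoc t, hc, mul_assoc, ht, mul_one])

lemma eq_zero_of_eq_neg {E : Type*} [AddCommGroup E] [Module ℂ E] {x : E} (h : x = -x) :
    x = 0 := by
  have h2 : (2 : ℂ) • x = 0 := by
    rw [two_smul]
    nth_rewrite 1 [h]
    exact neg_add_cancel x
  exact (smul_eq_zero.1 h2).resolve_left two_ne_zero

lemma Meas_of_le_centralizer {G : Submonoid (Op ι)} {M : Op ι} (ε : ℂ)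
    (h : G ≤ Submonoid.centralizer {M}) : Meas G M ε = G :=
  if_pos fun _ hg => (mem_centralizer_singleton_iff.1 (h hg)).eq

/-- The centralizer of `M` in `⟨t⟩ ⊔ H` is `H`, since every element is `h` or `h t`. -/
theorem Meas_closure_singleton_sup {H : Submonoid (Op ι)} {t M : Op ι} (ε : ℂ) (hM : M ≠ 0)
    (hHunit : H ≤ IsUnit.submonoid (Op ι)) (hMH : H ≤ Submonoid.centralizer {M})
    (htH : H ≤ Submonoid.centralizer {t}) (htM : M * t = -(t * M)) (ht : t * t = 1) :
    Meas (Submonoid.closure {t} ⊔ H) M ε = Submonoid.closure {ε • M} ⊔ H := by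
  have hMht : ∀ h ∈ H, M * (h * t) ≠ h * t * M := by
    intro h hh hcomm
    have hMh : M * h = h * M := (mem_centralizer_singleton_iff.1 (hMH hh)).eq
    have hzero : h * t * M = 0 := by
      refine eq_zero_of_eq_neg ?_
      calc h * t * M = M * (h * t) := hcomm.symm
        _ = h * (M * t) := by rw [← mul_assoc, hMh, mul_assoc]
        _ = -(h * t * M) := by rw [htM, mul_neg, mul_assoc]
    have hunit : IsUnit (h * t) := (hHunit hh).mul ⟨⟨t, t, ht, ht⟩, rfl⟩
    exact hM ((hunit.mul_right_eq_zero).1 hzero)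
  have hcent : {g | g ∈ Submonoid.closure {t} ⊔ H ∧ M * g = g * M} = (H : Set (Op ι)) := by
    ext g
    refine ⟨fun ⟨hg, hMg⟩ => ?_, fun hg => ⟨Submonoid.mem_sup_right hg,
      (mem_centralizer_singleton_iff.1 (hMH hg)).eq⟩⟩
    obtain ⟨h, hh, rfl | rfl⟩ := exists_eq_or_eq_mul_of_mem_closure_singleton_sup ht htH hg
    · exact hh
    · exact absurd hMg (hMht h hh)
  have hnot : ¬ ∀ g ∈ Submonoid.closure {t} ⊔ H, M * g = g * M := fun hall =>
    hMht 1 H.one_mem (by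
      rw [one_mul]; exact hall t (Submonoid.mem_sup_left Submonoid.mem_closure_singleton_self))
  rw [Meas, if_neg hnot, hcent, Submonoid.closure_union, Submonoid.closure_eq, sup_comm]

end Measurement

section UnitsSMul

lemma units_smul_mul_self {M : Type*} [Ring M] (u : ℤˣ) {a : M} (ha : a * a = 1) :
    (u • a) * (u • a) = 1 := by
  rw [smul_mul_smul_comm, Int.units_mul_self, ha, one_smul]

lemma centralizer_le_centralizer_smul {M : Type*} [Ring M] (a : M) (u : ℤˣ) :
    Submonoid.centralizer {a} ≤ Submonoid.centralizer {u • a} := fun _ hg =>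
  mem_centralizer_singleton_iff.2 ((mem_centralizer_singleton_iff.1 hg).smul_left u)

lemma coe_units_smul (u : ℤˣ) (M : Op ι) :
    ((u : ℤ) : ℂ) • M = u • M := by
  rw [Units.smul_def, Int.cast_smul_eq_zsmul]

lemma mul_units_smul_of_anticommute {M : Type*} [Ring M] {a b : M} (u : ℤˣ)
    (h : a * b = -(b * a)) : b * (u • a) = -((u • a) * b) := by
  rw [mul_smul_comm, smul_mul_assoc, h, smul_neg, neg_neg]

end UnitsSMul

section Groups

variable {N : ℕ}

/-- `φ_p φ_q g_{p,q}`; the value `1` at `p = q` lets `pairOp_mul_pairOp` hold without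
distinctness hypotheses. -/
def pairOp (N : ℕ) (φ : ℕ → ℤˣ) (p q : ℕ) : Op (Fin N) :=
  if p = q then 1 else (φ p * φ q) • stringOp N p q

def pairGroup (N : ℕ) (φ : ℕ → ℤˣ) (A : Finset ℕ) : Submonoid (Op (Fin N)) :=
  Submonoid.closure (Set.image2 (pairOp N φ) A A)

def blockGroup (N : ℕ) (φ : ℕ → ℤˣ) (z : ℤˣ) (A : Finset ℕ) :
    Submonoid (Op (Fin N)) :=
  Submonoid.closure {z • blockZ N A} ⊔ pairGroup N φ A

def stabGroup (N : ℕ) (P : Finset (Finset ℕ)) (φ : ℕ → ℤˣ) (ζ : Finset ℕ → ℤˣ) :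
    Submonoid (Op (Fin N)) :=
  ⨆ A ∈ P, blockGroup N φ (ζ A) A

def SameParity (A : Finset ℕ) : Prop := ∀ p ∈ A, ∀ q ∈ A, p % 2 = q % 2

lemma SameParity.subset {A B : Finset ℕ} (hA : SameParity A) (hBA : B ⊆ A) : SameParity B :=
  fun p hp q hq => hA p (hBA hp) q (hBA hq)

variable {φ : ℕ → ℤˣ} {ζ : Finset ℕ → ℤˣ} {P : Finset (Finset ℕ)}

lemma pairOp_self (p : ℕ) : pairOp N φ p p = 1 := if_pos rfl

lemma pairOp_of_lt {p q : ℕ} (hpq : p < q) : pairOp N φ p q = (φ p * φ q) • GStr N p q := by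
  rw [pairOp, if_neg hpq.ne, GStr_eq_stringOp hpq]

lemma pairOp_comm {p q : ℕ} (h : p % 2 = q % 2) : pairOp N φ p q = pairOp N φ q p := by
  unfold pairOp
  split_ifs with hpq hqp hqp
  · rfl
  · exact absurd hpq.symm hqp
  · exact absurd hqp.symm hpq
  · rw [stringOp_comm h, mul_comm]

lemma pairOp_mul_self {p q : ℕ} (h : p % 2 = q % 2) : pairOp N φ p q * pairOp N φ p q = 1 := by
  unfold pairOp
  split_ifs
  · exact one_mul 1
  · rw [smul_mul_smul_comm, Int.units_mul_self, stringOp_mul_self h, one_smul]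

lemma pairOp_mul_pairOp {p q r : ℕ} (h₁ : p % 2 = q % 2) (h₂ : q % 2 = r % 2) :
    pairOp N φ p q * pairOp N φ q r = pairOp N φ p r := by
  by_cases hpq : p = q
  · subst hpq; rw [pairOp_self, one_mul]
  by_cases hqr : q = r
  · subst hqr; rw [pairOp_self, mul_one]
  by_cases hpr : p = r
  · subst hpr; rw [← pairOp_comm h₁, pairOp_mul_self h₁, pairOp_self]
  rw [pairOp, pairOp, pairOp, if_neg hpq, if_neg hqr, if_neg hpr, smul_mul_smul_comm,
    stringOp_mul_stringOp hpq hqr hpr h₁ h₂, mul_assoc, ← mul_assoc (φ q),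
    Int.units_mul_self, one_mul]

lemma pairOp_congr {ψ : ℕ → ℤˣ} {A : Finset ℕ} {c : ℤˣ}
    (h : ∀ x ∈ A, ψ x = c * φ x) {p q : ℕ} (hp : p ∈ A) (hq : q ∈ A) :
    pairOp N ψ p q = pairOp N φ p q := by
  unfold pairOp
  rw [h p hp, h q hq, mul_mul_mul_comm, Int.units_mul_self, one_mul]

lemma pairGroup_congr {ψ : ℕ → ℤˣ} {A : Finset ℕ} {c : ℤˣ}
    (h : ∀ x ∈ A, ψ x = c * φ x) : pairGroup N ψ A = pairGroup N φ A := by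
  unfold pairGroup
  congr 1
  exact Set.image2_congr fun p hp q hq => pairOp_congr h hp hq

lemma pairGroup_singleton (x : ℕ) : pairGroup N φ {x} = ⊥ := by
  simp [pairGroup, pairOp_self, Submonoid.closure_singleton_one]

lemma mem_pairGroup {A : Finset ℕ} {p q : ℕ} (hp : p ∈ A) (hq : q ∈ A) :
    pairOp N φ p q ∈ pairGroup N φ A :=
  Submonoid.subset_closure (Set.mem_image2_of_mem hp hq)

/-- `g_{x,y} = g_{x,a} g_{a,b} g_{b,y}` for `x ∈ A`, `y ∈ B`. -/
lemma pairGroup_union {A B : Finset ℕ} (hAB : SameParity (A ∪ B)) {a b : ℕ} (ha : a ∈ A)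
    (hb : b ∈ B) : pairGroup N φ (A ∪ B) =
      Submonoid.closure {pairOp N φ a b} ⊔ pairGroup N φ A ⊔ pairGroup N φ B := by
  have ha' : a ∈ A ∪ B := Finset.mem_union_left B ha
  have hb' : b ∈ A ∪ B := Finset.mem_union_right A hb
  have mono : ∀ {C : Finset ℕ}, C ⊆ A ∪ B → pairGroup N φ C ≤ pairGroup N φ (A ∪ B) :=
    fun hC => Submonoid.closure_mono
      (Set.image2_subset (Finset.coe_subset.2 hC) (Finset.coe_subset.2 hC))
  apply le_antisymm
  · set K := Submonoid.closure {pairOp N φ a b} ⊔ pairGroup N φ A ⊔ pairGroup N φ B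
    have hab : pairOp N φ a b ∈ K :=
      Submonoid.mem_sup_left (Submonoid.mem_sup_left Submonoid.mem_closure_singleton_self)
    have hA : ∀ {x y}, x ∈ A → y ∈ A → pairOp N φ x y ∈ K :=
      fun hx hy => Submonoid.mem_sup_left (Submonoid.mem_sup_right (mem_pairGroup hx hy))
    have hB : ∀ {x y}, x ∈ B → y ∈ B → pairOp N φ x y ∈ K :=
      fun hx hy => Submonoid.mem_sup_right (mem_pairGroup hx hy)
    have par : ∀ {x y}, x ∈ A ∪ B → y ∈ A ∪ B → x % 2 = y % 2 :=
      fun hx hy => hAB _ hx _ hy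
    refine Submonoid.closure_le.2 (Set.image2_subset_iff.2 fun x hx y hy => ?_)
    simp only [Finset.coe_union, Set.mem_union, Finset.mem_coe] at hx hy
    rcases hx with hx | hx <;> rcases hy with hy | hy
    · exact hA hx hy
    · rw [← pairOp_mul_pairOp (par (by simp [hx]) ha') (par ha' (by simp [hy])),
        ← pairOp_mul_pairOp (par ha' hb') (par hb' (by simp [hy]))]
      exact mul_mem (hA hx ha) (mul_mem hab (hB hb hy))
    · rw [← pairOp_mul_pairOp (par (by simp [hx]) hb') (par hb' (by simp [hy])),
        ← pairOp_mul_pairOp (par hb' ha') (par ha' (by simp [hy])), pairOp_comm (par hb' ha')]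
      exact mul_mem (hB hx hb) (mul_mem hab (hA ha hy))
    · exact hB hx hy
  · exact sup_le (sup_le ((Submonoid.closure_singleton_le_iff_mem _ _).2
      (mem_pairGroup ha' hb')) (mono Finset.subset_union_left)) (mono Finset.subset_union_right)

lemma pairGroup_eq_sup_erase {A : Finset ℕ} (hA : SameParity A) {ℓ r : ℕ} (hℓ : ℓ ∈ A)
    (hr : r ∈ A) (hrℓ : r ≠ ℓ) :
    pairGroup N φ A = Submonoid.closure {pairOp N φ ℓ r} ⊔ pairGroup N φ (A.erase ℓ) := by
  have hA' : A = {ℓ} ∪ A.erase ℓ := by rw [← Finset.insert_eq, Finset.insert_erase hℓ]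
  conv_lhs => rw [hA']
  rw [pairGroup_union (hA' ▸ hA) (Finset.mem_singleton_self ℓ)
    (Finset.mem_erase.2 ⟨hrℓ, hr⟩), pairGroup_singleton, sup_bot_eq]

lemma stabGroup_insert (A : Finset ℕ) (P : Finset (Finset ℕ)) :
    stabGroup N (insert A P) φ ζ = blockGroup N φ (ζ A) A ⊔ stabGroup N P φ ζ :=
  Finset.iSup_insert _ _ _

lemma stabGroup_eq_sup_erase {A : Finset ℕ} (hA : A ∈ P) :
    stabGroup N P φ ζ = blockGroup N φ (ζ A) A ⊔ stabGroup N (P.erase A) φ ζ := by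
  rw [← stabGroup_insert, Finset.insert_erase hA]

lemma blockGroup_le_stabGroup {A : Finset ℕ} (hA : A ∈ P) :
    blockGroup N φ (ζ A) A ≤ stabGroup N P φ ζ :=
  le_iSup₂_of_le A hA le_rfl

lemma stabGroup_congr {ψ : ℕ → ℤˣ} {ξ : Finset ℕ → ℤˣ} (hψ : ∀ A ∈ P, ∀ x ∈ A, ψ x = φ x)
    (hξ : ∀ A ∈ P, ξ A = ζ A) : stabGroup N P ψ ξ = stabGroup N P φ ζ :=
  iSup_congr fun A => iSup_congr fun hA => by
    rw [blockGroup, blockGroup, hξ A hA, pairGroup_congr (c := 1) (by simpa using hψ A hA)]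

end Groups

section Commutation

variable {N : ℕ} {φ : ℕ → ℤˣ}

lemma closure_smul_blockZ_le_isUnit (z : ℤˣ) (A : Finset ℕ) :
    Submonoid.closure {z • blockZ N A} ≤ IsUnit.submonoid _ :=
  closure_le_isUnit (by simpa using units_smul_mul_self z (blockZ_mul_self A))

lemma pairGroup_le_isUnit {A : Finset ℕ} (hA : SameParity A) :
    pairGroup N φ A ≤ IsUnit.submonoid _ :=
  closure_le_isUnit (Set.forall_mem_image2.2 fun p hp q hq => pairOp_mul_self (hA p hp q hq))

lemma blockGroup_le_isUnit {A : Finset ℕ} (hA : SameParity A) (z : ℤˣ) :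
    blockGroup N φ z A ≤ IsUnit.submonoid _ :=
  sup_le (closure_smul_blockZ_le_isUnit z A) (pairGroup_le_isUnit hA)

lemma closure_smul_blockZ_le_centralizer_stringOp {A : Finset ℕ} {x y : ℕ} (hxy : x ≠ y)
    (hx : x ∈ Finset.Icc 1 N) (hy : y ∈ Finset.Icc 1 N) (hA : x ∈ A ↔ y ∈ A) (z : ℤˣ) :
    Submonoid.closure {z • blockZ N A} ≤ Submonoid.centralizer {stringOp N x y} :=
  (Submonoid.closure_singleton_le_iff_mem _ _).2
    (mem_centralizer_singleton_iff.2 ((stringOp_commute_blockZ A hxy hx hy hA).smul_right z))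

lemma closure_smul_blockZ_le_centralizer_blockZ (A S : Finset ℕ) (z : ℤˣ) :
    Submonoid.closure {z • blockZ N A} ≤ Submonoid.centralizer {blockZ N S} :=
  (Submonoid.closure_singleton_le_iff_mem _ _).2
    (mem_centralizer_singleton_iff.2 ((blockZ_commute_blockZ S A).smul_right z))

lemma pairGroup_le_centralizer_stringOp {A : Finset ℕ} (hA : SameParity A)
    (hAN : A ⊆ Finset.Icc 1 N) {x y : ℕ} (hxy : x ≠ y) (hxy₂ : x % 2 = y % 2)
    (hx : x ∈ Finset.Icc 1 N) (hy : y ∈ Finset.Icc 1 N) :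
    pairGroup N φ A ≤ Submonoid.centralizer {stringOp N x y} := by
  refine Submonoid.closure_le.2 (Set.image2_subset_iff.2 fun p hp q hq => ?_)
  rw [SetLike.mem_coe, mem_centralizer_singleton_iff, pairOp]
  split_ifs with hpq
  · exact Commute.one_right _
  · exact (stringOp_commute_stringOp hxy hpq hxy₂ (hA p hp q hq) hx hy (hAN hp)
      (hAN hq)).smul_right _

lemma blockGroup_le_centralizer_stringOp {A : Finset ℕ} (hA : SameParity A)
    (hAN : A ⊆ Finset.Icc 1 N) {x y : ℕ} (hxy : x ≠ y) (hxy₂ : x % 2 = y % 2)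
    (hx : x ∈ Finset.Icc 1 N) (hy : y ∈ Finset.Icc 1 N) (hxyA : x ∈ A ↔ y ∈ A) (z : ℤˣ) :
    blockGroup N φ z A ≤ Submonoid.centralizer {stringOp N x y} :=
  sup_le (closure_smul_blockZ_le_centralizer_stringOp hxy hx hy hxyA z)
    (pairGroup_le_centralizer_stringOp hA hAN hxy hxy₂ hx hy)

lemma pairGroup_le_centralizer_blockZ {A : Finset ℕ} (hAN : A ⊆ Finset.Icc 1 N)
    {S : Finset ℕ} (hS : A ⊆ S ∨ Disjoint A S) :
    pairGroup N φ A ≤ Submonoid.centralizer {blockZ N S} := by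
  refine Submonoid.closure_le.2 (Set.image2_subset_iff.2 fun p hp q hq => ?_)
  rw [SetLike.mem_coe, mem_centralizer_singleton_iff, pairOp]
  split_ifs with hpq
  · exact Commute.one_right _
  · refine ((stringOp_commute_blockZ S hpq (hAN hp) (hAN hq) ?_).symm).smul_right _
    rcases hS with hS | hS
    · exact iff_of_true (hS hp) (hS hq)
    · exact iff_of_false (Finset.disjoint_left.1 hS hp) (Finset.disjoint_left.1 hS hq)

lemma blockGroup_le_centralizer_blockZ {A : Finset ℕ} (hAN : A ⊆ Finset.Icc 1 N)
    {S : Finset ℕ} (hS : A ⊆ S ∨ Disjoint A S) (z : ℤˣ) :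
    blockGroup N φ z A ≤ Submonoid.centralizer {blockZ N S} :=
  sup_le (closure_smul_blockZ_le_centralizer_blockZ A S z)
    (pairGroup_le_centralizer_blockZ hAN hS)

end Commutation

section Partition

structure IsParityPartition (N : ℕ) (P : Finset (Finset ℕ)) : Prop where
  nonempty : ∀ A ∈ P, A.Nonempty
  pairwiseDisjoint : (P : Set (Finset ℕ)).PairwiseDisjoint id
  biUnion_eq : P.biUnion id = Finset.Icc 1 N
  sameParity : ∀ A ∈ P, SameParity A

namespace IsParityPartition

variable {N : ℕ} {P : Finset (Finset ℕ)}

lemma subset_Icc (hP : IsParityPartition N P) {A : Finset ℕ} (hA : A ∈ P) :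
    A ⊆ Finset.Icc 1 N :=
  hP.biUnion_eq ▸ Finset.subset_biUnion_of_mem id hA

lemma disjoint (hP : IsParityPartition N P) {A B : Finset ℕ} (hA : A ∈ P) (hB : B ∈ P)
    (hAB : A ≠ B) : Disjoint A B :=
  hP.pairwiseDisjoint hA hB hAB

lemma existsUnique (hP : IsParityPartition N P) {x : ℕ} (hx : x ∈ Finset.Icc 1 N) :
    ∃! A, A ∈ P ∧ x ∈ A := by
  rw [← hP.biUnion_eq, Finset.mem_biUnion] at hx
  obtain ⟨A, hA, hxA⟩ := hx
  refine ⟨A, ⟨hA, hxA⟩, fun B ⟨hB, hxB⟩ => ?_⟩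
  by_contra hBA
  exact Finset.disjoint_left.1 (hP.disjoint hB hA hBA) hxB hxA

lemma notMem_of_mem_erase (hP : IsParityPartition N P) {A B : Finset ℕ} (hA : A ∈ P)
    (hB : B ∈ P.erase A) {x : ℕ} (hx : x ∈ A) : x ∉ B :=
  Finset.disjoint_left.1
    (hP.disjoint hA (Finset.mem_of_mem_erase hB) (Finset.ne_of_mem_erase hB).symm) hx

lemma notMem_of_mem_erase_erase (hP : IsParityPartition N P) {A B C : Finset ℕ} (hA : A ∈ P)
    (hB : B ∈ P) (hC : C ∈ (P.erase A).erase B) {x : ℕ} (hx : x ∈ A ∨ x ∈ B) : x ∉ C := by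
  have hCP := Finset.mem_of_mem_erase (Finset.mem_of_mem_erase hC)
  rcases hx with hx | hx
  · exact hP.notMem_of_mem_erase hA (Finset.mem_of_mem_erase hC) hx
  · exact hP.notMem_of_mem_erase hB (Finset.mem_erase.2 ⟨Finset.ne_of_mem_erase hC, hCP⟩) hx

lemma split (hP : IsParityPartition N P) {A : Finset ℕ} (hA : A ∈ P) {ℓ r : ℕ} (hℓ : ℓ ∈ A)
    (hr : r ∈ A) (hrℓ : r ≠ ℓ) :
    IsParityPartition N (insert {ℓ} (insert (A.erase ℓ) (P.erase A))) where
  nonempty B hB := by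
    rcases Finset.mem_insert.1 hB with rfl | hB
    · exact Finset.singleton_nonempty ℓ
    rcases Finset.mem_insert.1 hB with rfl | hB
    · exact ⟨r, Finset.mem_erase.2 ⟨hrℓ, hr⟩⟩
    · exact hP.nonempty B (Finset.mem_of_mem_erase hB)
  pairwiseDisjoint := by
    have hR : ∀ B ∈ P.erase A, Disjoint A B := fun B hB =>
      hP.disjoint hA (Finset.mem_of_mem_erase hB) (Finset.ne_of_mem_erase hB).symm
    rw [Finset.coe_insert, Finset.coe_insert, Set.pairwiseDisjoint_insert,
      Set.pairwiseDisjoint_insert]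
    refine ⟨⟨hP.pairwiseDisjoint.subset (Finset.coe_subset.2 (Finset.erase_subset A P)),
      fun B hB _ => (hR B hB).mono_left (Finset.erase_subset ℓ A)⟩, ?_⟩
    rintro B (rfl | hB) -
    · exact Finset.disjoint_singleton_left.2 (Finset.notMem_erase ℓ A)
    · exact Finset.disjoint_singleton_left.2 (Finset.disjoint_left.1 (hR B hB) hℓ)
  biUnion_eq := by
    rw [← hP.biUnion_eq, Finset.biUnion_insert, Finset.biUnion_insert, ← Finset.union_assoc,
      id, id, ← Finset.insert_eq, Finset.insert_erase hℓ]
    conv_rhs => rw [← Finset.insert_erase hA, Finset.biUnion_insert]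
    rfl
  sameParity B hB := by
    rcases Finset.mem_insert.1 hB with rfl | hB
    · intro x hx y hy; rw [Finset.mem_singleton.1 hx, Finset.mem_singleton.1 hy]
    rcases Finset.mem_insert.1 hB with rfl | hB
    · exact fun x hx y hy => hP.sameParity A hA x (Finset.mem_of_mem_erase hx) y
        (Finset.mem_of_mem_erase hy)
    · exact hP.sameParity B (Finset.mem_of_mem_erase hB)

lemma merge (hP : IsParityPartition N P) {A B : Finset ℕ} (hA : A ∈ P) (hB : B ∈ P)
    (hAB : A ≠ B) {a b : ℕ} (ha : a ∈ A) (hb : b ∈ B) (hab : a % 2 = b % 2) :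
    IsParityPartition N (insert (A ∪ B) ((P.erase A).erase B)) where
  nonempty C hC := by
    rcases Finset.mem_insert.1 hC with rfl | hC
    · exact ⟨a, Finset.mem_union_left B ha⟩
    · exact hP.nonempty C (Finset.mem_of_mem_erase (Finset.mem_of_mem_erase hC))
  pairwiseDisjoint := by
    rw [Finset.coe_insert, Set.pairwiseDisjoint_insert]
    refine ⟨hP.pairwiseDisjoint.subset (Finset.coe_subset.2
      ((Finset.erase_subset B _).trans (Finset.erase_subset A P))), fun C hC _ => ?_⟩
    simp only [Finset.mem_coe, Finset.mem_erase] at hC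
    exact Finset.disjoint_union_left.2 ⟨hP.disjoint hA hC.2.2 (Ne.symm hC.2.1),
      hP.disjoint hB hC.2.2 (Ne.symm hC.1)⟩
  biUnion_eq := by
    have hB' : B ∈ P.erase A := Finset.mem_erase.2 ⟨hAB.symm, hB⟩
    rw [← hP.biUnion_eq, Finset.biUnion_insert, id, Finset.union_assoc]
    conv_rhs => rw [← Finset.insert_erase hA, Finset.biUnion_insert, ← Finset.insert_erase hB',
      Finset.biUnion_insert]
    rfl
  sameParity C hC := by
    rcases Finset.mem_insert.1 hC with rfl | hC
    · have h : ∀ x ∈ A ∪ B, x % 2 = a % 2 := by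
        intro x hx
        rcases Finset.mem_union.1 hx with hx | hx
        · exact hP.sameParity A hA x hx a ha
        · rw [hab]; exact hP.sameParity B hB x hx b hb
      exact fun x hx y hy => (h x hx).trans (h y hy).symm
    · exact hP.sameParity C (Finset.mem_of_mem_erase (Finset.mem_of_mem_erase hC))

lemma singletons (N : ℕ) : IsParityPartition N ((Finset.Icc 1 N).image fun x => {x}) where
  nonempty A hA := by
    obtain ⟨x, -, rfl⟩ := Finset.mem_image.1 hA
    exact Finset.singleton_nonempty x
  pairwiseDisjoint := by
    intro A hA B hB hAB
    obtain ⟨x, -, rfl⟩ := Finset.mem_image.1 (Finset.mem_coe.1 hA)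
    obtain ⟨y, -, rfl⟩ := Finset.mem_image.1 (Finset.mem_coe.1 hB)
    exact Finset.disjoint_singleton.2 fun h => hAB (h ▸ rfl)
  biUnion_eq := by rw [Finset.image_biUnion]; exact Finset.biUnion_singleton_eq_self
  sameParity A hA := by
    obtain ⟨x, -, rfl⟩ := Finset.mem_image.1 hA
    intro p hp q hq
    rw [Finset.mem_singleton.1 hp, Finset.mem_singleton.1 hq]

end IsParityPartition

end Partition

section CommutingMeasurements

variable {N : ℕ} {P : Finset (Finset ℕ)} {φ : ℕ → ℤˣ} {ζ : Finset ℕ → ℤˣ}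

lemma stabGroup_le_isUnit (hP : IsParityPartition N P) {R : Finset (Finset ℕ)} (hR : R ⊆ P) :
    stabGroup N R φ ζ ≤ IsUnit.submonoid _ :=
  iSup₂_le fun A hA => blockGroup_le_isUnit (hP.sameParity A (hR hA)) _

lemma stabGroup_le_centralizer_stringOp (hP : IsParityPartition N P) {R : Finset (Finset ℕ)}
    (hR : R ⊆ P) {x y : ℕ} (hxy : x ≠ y) (hxy₂ : x % 2 = y % 2) (hx : x ∈ Finset.Icc 1 N)
    (hy : y ∈ Finset.Icc 1 N) (h : ∀ B ∈ R, x ∈ B ↔ y ∈ B) :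
    stabGroup N R φ ζ ≤ Submonoid.centralizer {stringOp N x y} :=
  iSup₂_le fun B hB => blockGroup_le_centralizer_stringOp (hP.sameParity B (hR hB))
    (hP.subset_Icc (hR hB)) hxy hxy₂ hx hy (h B hB) _

lemma stabGroup_le_centralizer_blockZ (hP : IsParityPartition N P) {R : Finset (Finset ℕ)}
    (hR : R ⊆ P) {S : Finset ℕ} (h : ∀ B ∈ R, B ⊆ S ∨ Disjoint B S) :
    stabGroup N R φ ζ ≤ Submonoid.centralizer {blockZ N S} :=
  iSup₂_le fun B hB => blockGroup_le_centralizer_blockZ (hP.subset_Icc (hR hB)) (h B hB) _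

lemma Meas_stabGroup_blockZ_of_singleton_mem (hP : IsParityPartition N P) {ℓ : ℕ}
    (hℓ : {ℓ} ∈ P) (ε : ℂ) : Meas (stabGroup N P φ ζ) (blockZ N {ℓ}) ε = stabGroup N P φ ζ := by
  refine Meas_of_le_centralizer ε (stabGroup_le_centralizer_blockZ hP subset_rfl fun B hB => ?_)
  by_cases hBℓ : B = {ℓ}
  · exact Or.inl hBℓ.le
  · exact Or.inr (hP.disjoint hB hℓ hBℓ)

lemma Meas_stabGroup_stringOp_of_mem (hP : IsParityPartition N P) {A : Finset ℕ} (hA : A ∈ P)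
    {x y : ℕ} (hx : x ∈ A) (hy : y ∈ A) (hxy : x ≠ y) (ε : ℂ) :
    Meas (stabGroup N P φ ζ) (stringOp N x y) ε = stabGroup N P φ ζ := by
  refine Meas_of_le_centralizer ε (stabGroup_le_centralizer_stringOp hP subset_rfl hxy
    (hP.sameParity A hA x hx y hy) (hP.subset_Icc hA hx) (hP.subset_Icc hA hy) fun B hB => ?_)
  by_cases hBA : B = A
  · subst hBA; exact iff_of_true hx hy
  · exact iff_of_false (Finset.disjoint_right.1 (hP.disjoint hB hA hBA) hx)
      (Finset.disjoint_right.1 (hP.disjoint hB hA hBA) hy)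

end CommutingMeasurements

section Split

variable {N : ℕ} {P : Finset (Finset ℕ)} {φ : ℕ → ℤˣ} {ζ : Finset ℕ → ℤˣ}

lemma stabGroup_eq_sup_split {A : Finset ℕ} (hA : A ∈ P) (hApar : SameParity A) {ℓ r : ℕ}
    (hℓ : ℓ ∈ A) (hr : r ∈ A) (hrℓ : r ≠ ℓ) :
    stabGroup N P φ ζ = Submonoid.closure {pairOp N φ ℓ r} ⊔
      (Submonoid.closure {ζ A • blockZ N A} ⊔ pairGroup N φ (A.erase ℓ) ⊔
        stabGroup N (P.erase A) φ ζ) := by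
  rw [stabGroup_eq_sup_erase hA, blockGroup, pairGroup_eq_sup_erase hApar hℓ hr hrℓ]
  ac_rfl

lemma Meas_stabGroup_blockZ_eq_sup (hP : IsParityPartition N P) {A : Finset ℕ} (hA : A ∈ P)
    {ℓ r : ℕ} (hℓ : ℓ ∈ A) (hr : r ∈ A) (hrℓ : r ≠ ℓ) (u : ℤˣ) :
    Meas (stabGroup N P φ ζ) (blockZ N {ℓ}) ((u : ℤ) : ℂ) =
      Submonoid.closure {u • blockZ N {ℓ}} ⊔ (Submonoid.closure {ζ A • blockZ N A} ⊔
        pairGroup N φ (A.erase ℓ) ⊔ stabGroup N (P.erase A) φ ζ) := by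
  have hAN := hP.subset_Icc hA
  have hA'N : A.erase ℓ ⊆ Finset.Icc 1 N := (Finset.erase_subset ℓ A).trans hAN
  have hA' := (hP.sameParity A hA).subset (Finset.erase_subset ℓ A)
  have hR : P.erase A ⊆ P := Finset.erase_subset A P
  have hℓR : ∀ B ∈ P.erase A, ℓ ∉ B := fun B hB => hP.notMem_of_mem_erase hA hB hℓ
  have hrR : ∀ B ∈ P.erase A, r ∉ B := fun B hB => hP.notMem_of_mem_erase hA hB hr
  have hℓr := hP.sameParity A hA ℓ hℓ r hr
  have ht : pairOp N φ ℓ r = (φ ℓ * φ r) • stringOp N ℓ r := if_neg hrℓ.symm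
  rw [stabGroup_eq_sup_split hA (hP.sameParity A hA) hℓ hr hrℓ,
    Meas_closure_singleton_sup _ (blockZ_ne_zero N {ℓ}), coe_units_smul]
  · exact sup_le (sup_le (closure_smul_blockZ_le_isUnit _ _) (pairGroup_le_isUnit hA'))
      (stabGroup_le_isUnit hP hR)
  · exact sup_le (sup_le (closure_smul_blockZ_le_centralizer_blockZ _ _ _)
      (pairGroup_le_centralizer_blockZ hA'N
        (Or.inr (Finset.disjoint_singleton_right.2 (Finset.notMem_erase ℓ A)))))
      (stabGroup_le_centralizer_blockZ hP hR fun B hB =>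
        Or.inr (Finset.disjoint_singleton_right.2 (hℓR B hB)))
  · rw [ht]
    refine le_trans (sup_le (sup_le ?_ ?_) ?_) (centralizer_le_centralizer_smul _ _)
    · exact closure_smul_blockZ_le_centralizer_stringOp hrℓ.symm (hAN hℓ) (hAN hr)
        (iff_of_true hℓ hr) _
    · exact pairGroup_le_centralizer_stringOp hA' hA'N hrℓ.symm hℓr (hAN hℓ) (hAN hr)
    · exact stabGroup_le_centralizer_stringOp hP hR hrℓ.symm hℓr (hAN hℓ) (hAN hr)
        fun B hB => iff_of_false (hℓR B hB) (hrR B hB)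
  · rw [ht]
    exact mul_units_smul_of_anticommute _ (stringOp_anticommute_blockZ _ hrℓ.symm (hAN hℓ)
      (hAN hr) (Finset.mem_singleton_self ℓ) (by simpa using hrℓ))
  · exact pairOp_mul_self hℓr

theorem Meas_stabGroup_blockZ_split (hP : IsParityPartition N P) {A : Finset ℕ} (hA : A ∈ P)
    {ℓ r : ℕ} (hℓ : ℓ ∈ A) (hr : r ∈ A) (hrℓ : r ≠ ℓ) (u : ℤˣ) :
    Meas (stabGroup N P φ ζ) (blockZ N {ℓ}) ((u : ℤ) : ℂ) =
      stabGroup N (insert {ℓ} (insert (A.erase ℓ) (P.erase A))) φ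
        (Function.update (Function.update ζ {ℓ} u) (A.erase ℓ) (u * ζ A)) := by
  have hrA' : r ∈ A.erase ℓ := Finset.mem_erase.2 ⟨hrℓ, hr⟩
  have hζR : ∀ B ∈ P.erase A,
      Function.update (Function.update ζ {ℓ} u) (A.erase ℓ) (u * ζ A) B = ζ B := by
    intro B hB
    rw [Function.update_of_ne
        (ne_of_mem_of_not_mem' hrA' (hP.notMem_of_mem_erase hA hB hr)).symm,
      Function.update_of_ne (ne_of_mem_of_not_mem' (Finset.mem_singleton_self ℓ)
        (hP.notMem_of_mem_erase hA hB hℓ)).symm]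
  have hZ : (u • blockZ N {ℓ}) * (ζ A • blockZ N A) = (u * ζ A) • blockZ N (A.erase ℓ) := by
    rw [smul_mul_smul_comm, blockZ_mul_blockZ, singleton_symmDiff_of_mem hℓ]
  rw [Meas_stabGroup_blockZ_eq_sup hP hA hℓ hr hrℓ u, stabGroup_insert, stabGroup_insert,
    Function.update_self, Function.update_of_ne
      (ne_of_mem_of_not_mem' (Finset.mem_singleton_self ℓ) (Finset.notMem_erase ℓ A)),
    Function.update_self, blockGroup, blockGroup, pairGroup_singleton, sup_bot_eq,
    stabGroup_congr (fun _ _ _ _ => rfl) hζR, ← hZ]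
  simp only [← sup_assoc]
  rw [closure_singleton_sup_closure_singleton_mul _ (units_smul_mul_self u (blockZ_mul_self _))]

end Split

section Merge

variable {N : ℕ} {P : Finset (Finset ℕ)} {φ : ℕ → ℤˣ} {ζ : Finset ℕ → ℤˣ}

lemma stabGroup_eq_sup_merge {A B : Finset ℕ} (hA : A ∈ P) (hB : B ∈ P) (hAB : A ≠ B)
    (hdisj : Disjoint A B) :
    stabGroup N P φ ζ = Submonoid.closure {ζ A • blockZ N A} ⊔
      (Submonoid.closure {(ζ A * ζ B) • blockZ N (A ∪ B)} ⊔ pairGroup N φ A ⊔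
        pairGroup N φ B ⊔ stabGroup N ((P.erase A).erase B) φ ζ) := by
  have hZ : (ζ A • blockZ N A) * (ζ B • blockZ N B) = (ζ A * ζ B) • blockZ N (A ∪ B) := by
    rw [smul_mul_smul_comm, blockZ_mul_blockZ, hdisj.symmDiff_eq_sup, Finset.sup_eq_union]
  rw [stabGroup_eq_sup_erase hA, stabGroup_eq_sup_erase (Finset.mem_erase.2 ⟨hAB.symm, hB⟩),
    blockGroup, blockGroup, ← hZ, sup_sup_sup_comm]
  simp only [← sup_assoc]
  rw [closure_singleton_sup_closure_singleton_mul _ (units_smul_mul_self _ (blockZ_mul_self A))]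
  ac_rfl

lemma Meas_stabGroup_stringOp_eq_sup (hP : IsParityPartition N P) {A B : Finset ℕ}
    (hA : A ∈ P) (hB : B ∈ P) (hAB : A ≠ B) {x y : ℕ} (hx : x ∈ A) (hy : y ∈ B)
    (hxy₂ : x % 2 = y % 2) (u : ℤˣ) :
    Meas (stabGroup N P φ ζ) (stringOp N x y) ((u : ℤ) : ℂ) =
      Submonoid.closure {u • stringOp N x y} ⊔
        (Submonoid.closure {(ζ A * ζ B) • blockZ N (A ∪ B)} ⊔ pairGroup N φ A ⊔
          pairGroup N φ B ⊔ stabGroup N ((P.erase A).erase B) φ ζ) := by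
  have hdisj := hP.disjoint hA hB hAB
  have hyA : y ∉ A := Finset.disjoint_right.1 hdisj hy
  have hxy : x ≠ y := ne_of_mem_of_not_mem hx hyA
  have hAN := hP.subset_Icc hA
  have hBN := hP.subset_Icc hB
  have hR : (P.erase A).erase B ⊆ P := (Finset.erase_subset _ _).trans (Finset.erase_subset _ _)
  have hxR : ∀ C ∈ (P.erase A).erase B, x ∉ C := fun C hC =>
    hP.notMem_of_mem_erase_erase hA hB hC (Or.inl hx)
  have hyR : ∀ C ∈ (P.erase A).erase B, y ∉ C := fun C hC =>
    hP.notMem_of_mem_erase_erase hA hB hC (Or.inr hy)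
  rw [stabGroup_eq_sup_merge hA hB hAB hdisj,
    Meas_closure_singleton_sup _ (stringOp_ne_zero N x y), coe_units_smul]
  · exact sup_le (sup_le (sup_le (closure_smul_blockZ_le_isUnit _ _)
      (pairGroup_le_isUnit (hP.sameParity A hA))) (pairGroup_le_isUnit (hP.sameParity B hB)))
      (stabGroup_le_isUnit hP hR)
  · refine sup_le (sup_le (sup_le ?_ ?_) ?_) ?_
    · exact closure_smul_blockZ_le_centralizer_stringOp hxy (hAN hx) (hBN hy)
        (iff_of_true (Finset.mem_union_left B hx) (Finset.mem_union_right A hy)) _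
    · exact pairGroup_le_centralizer_stringOp (hP.sameParity A hA) hAN hxy hxy₂ (hAN hx) (hBN hy)
    · exact pairGroup_le_centralizer_stringOp (hP.sameParity B hB) hBN hxy hxy₂ (hAN hx) (hBN hy)
    · exact stabGroup_le_centralizer_stringOp hP hR hxy hxy₂ (hAN hx) (hBN hy)
        fun C hC => iff_of_false (hxR C hC) (hyR C hC)
  · refine le_trans (sup_le (sup_le (sup_le ?_ ?_) ?_) ?_) (centralizer_le_centralizer_smul _ _)
    · exact closure_smul_blockZ_le_centralizer_blockZ _ _ _
    · exact pairGroup_le_centralizer_blockZ hAN (Or.inl subset_rfl)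
    · exact pairGroup_le_centralizer_blockZ hBN (Or.inr hdisj.symm)
    · exact stabGroup_le_centralizer_blockZ hP hR fun C hC =>
        Or.inr (hP.disjoint (hR hC) hA (ne_of_mem_of_not_mem' hx (hxR C hC)).symm)
  · exact mul_units_smul_of_anticommute _ (neg_eq_iff_eq_neg.2
      (stringOp_anticommute_blockZ A hxy (hAN hx) (hBN hy) hx hyA)).symm
  · exact units_smul_mul_self _ (blockZ_mul_self A)

/-- The signs on `B` are rescaled by `u φ_x φ_y` so that the new string `φ_x φ_y g_{x,y}` is
the measured `u g_{x,y}`. -/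
theorem Meas_stabGroup_stringOp_merge (hP : IsParityPartition N P) {A B : Finset ℕ}
    (hA : A ∈ P) (hB : B ∈ P) (hAB : A ≠ B) {x y : ℕ} (hx : x ∈ A) (hy : y ∈ B)
    (hxy₂ : x % 2 = y % 2) (u : ℤˣ) :
    Meas (stabGroup N P φ ζ) (stringOp N x y) ((u : ℤ) : ℂ) =
      stabGroup N (insert (A ∪ B) ((P.erase A).erase B))
        (fun w => if w ∈ B then u * φ x * φ y * φ w else φ w)
        (Function.update ζ (A ∪ B) (ζ A * ζ B)) := by
  set ψ : ℕ → ℤˣ := fun w => if w ∈ B then u * φ x * φ y * φ w else φ w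
  have hdisj := hP.disjoint hA hB hAB
  have hψA : ∀ w ∈ A, ψ w = 1 * φ w := fun w hw =>
    by simp [ψ, Finset.disjoint_left.1 hdisj hw]
  have hψB : ∀ w ∈ B, ψ w = (u * φ x * φ y) * φ w := fun w hw => if_pos hw
  have hψR : ∀ C ∈ (P.erase A).erase B, ∀ w ∈ C, ψ w = φ w := fun C hC w hw =>
    if_neg fun hwB => hP.notMem_of_mem_erase_erase hA hB hC (Or.inr hwB) hw
  have hζR : ∀ C ∈ (P.erase A).erase B, Function.update ζ (A ∪ B) (ζ A * ζ B) C = ζ C :=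
    fun C hC => Function.update_of_ne (ne_of_mem_of_not_mem' (Finset.mem_union_left B hx)
      (hP.notMem_of_mem_erase_erase hA hB hC (Or.inl hx))).symm _ _
  have hxy : pairOp N ψ x y = u • stringOp N x y := by
    rw [pairOp, if_neg (ne_of_mem_of_not_mem hx (Finset.disjoint_right.1 hdisj hy)), hψB y hy,
      show ψ x = φ x from if_neg (Finset.disjoint_left.1 hdisj hx)]
    congr 1
    rw [mul_assoc (u * φ x), Int.units_mul_self, mul_one, mul_left_comm, Int.units_mul_self,
      mul_one]
  rw [Meas_stabGroup_stringOp_eq_sup hP hA hB hAB hx hy hxy₂, stabGroup_insert,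
    Function.update_self, blockGroup, pairGroup_union ((hP.merge hA hB hAB hx hy hxy₂).sameParity
      _ (Finset.mem_insert_self _ _)) hx hy, hxy, pairGroup_congr hψA, pairGroup_congr hψB,
    stabGroup_congr hψR hζR]
  ac_rfl

end Merge

section Invariant

variable {N : ℕ}

def IsIsolatedSPTUnion (N : ℕ) (G : Submonoid (Op (Fin N))) : Prop :=
  ∃ P φ ζ, IsParityPartition N P ∧ G = stabGroup N P φ ζ

lemma isIsolatedSPTUnion_closure_range_PZ :
    IsIsolatedSPTUnion N (Submonoid.closure (Set.range (PZ : Fin N → Op (Fin N)))) := by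
  refine ⟨_, fun _ => 1, fun _ => 1, IsParityPartition.singletons N, le_antisymm ?_ ?_⟩
  · rw [Submonoid.closure_le]
    rintro _ ⟨i, rfl⟩
    have hi : ({lbl i} : Finset ℕ) ∈ (Finset.Icc 1 N).image fun x => ({x} : Finset ℕ) :=
      Finset.mem_image_of_mem (fun x => ({x} : Finset ℕ)) (lbl_mem_Icc i)
    refine blockGroup_le_stabGroup hi (Submonoid.mem_sup_left (Submonoid.subset_closure ?_))
    rw [PZ_eq_blockZ, one_smul, Set.mem_singleton_iff]
  · refine iSup₂_le fun A hA => ?_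
    obtain ⟨x, hx, rfl⟩ := Finset.mem_image.1 hA
    obtain ⟨i, rfl⟩ := exists_lbl_eq hx
    rw [blockGroup, pairGroup_singleton, sup_bot_eq, one_smul, ← PZ_eq_blockZ,
      Submonoid.closure_singleton_le_iff_mem]
    exact Submonoid.subset_closure ⟨i, rfl⟩

lemma IsIsolatedSPTUnion.Meas_PZ {G : Submonoid (Op (Fin N))} (hG : IsIsolatedSPTUnion N G)
    (i : Fin N) (u : ℤˣ) : IsIsolatedSPTUnion N (Meas G (PZ i) ((u : ℤ) : ℂ)) := by
  obtain ⟨P, φ, ζ, hP, rfl⟩ := hG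
  obtain ⟨A, ⟨hA, hℓ⟩, -⟩ := hP.existsUnique (lbl_mem_Icc i)
  rw [PZ_eq_blockZ]
  by_cases hsplit : ∃ r ∈ A, r ≠ lbl i
  · obtain ⟨r, hr, hrℓ⟩ := hsplit
    exact ⟨_, _, _, hP.split hA hℓ hr hrℓ, Meas_stabGroup_blockZ_split hP hA hℓ hr hrℓ u⟩
  · obtain rfl : A = {lbl i} := Finset.eq_singleton_iff_unique_mem.2
      ⟨hℓ, fun r hr => by_contra fun h => hsplit ⟨r, hr, h⟩⟩
    exact ⟨P, φ, ζ, hP, Meas_stabGroup_blockZ_of_singleton_mem hP hA _⟩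

lemma IsIsolatedSPTUnion.Meas_GStr {G : Submonoid (Op (Fin N))} (hG : IsIsolatedSPTUnion N G)
    {i : ℕ} (h2 : 2 ≤ i) (hiN : i ≤ N - 1) (u : ℤˣ) :
    IsIsolatedSPTUnion N (Meas G (GStr N (i - 1) (i + 1)) ((u : ℤ) : ℂ)) := by
  obtain ⟨P, φ, ζ, hP, rfl⟩ := hG
  obtain ⟨A, ⟨hA, hx⟩, -⟩ := hP.existsUnique (x := i - 1) (Finset.mem_Icc.2 ⟨by omega, by omega⟩)
  obtain ⟨B, ⟨hB, hy⟩, -⟩ := hP.existsUnique (x := i + 1) (Finset.mem_Icc.2 ⟨by omega, by omega⟩)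
  rw [GStr_eq_stringOp (by omega)]
  by_cases hAB : A = B
  · subst hAB
    exact ⟨P, φ, ζ, hP, Meas_stabGroup_stringOp_of_mem hP hA hx hy (by omega) _⟩
  · exact ⟨_, _, _, hP.merge hA hB hAB hx hy (by omega),
      Meas_stabGroup_stringOp_merge hP hA hB hAB hx hy (by omega) u⟩

lemma exists_units_int_cast_eq {ε : ℂ} (h : ε = 1 ∨ ε = -1) :
    ∃ u : ℤˣ, ((u : ℤ) : ℂ) = ε := by
  rcases h with rfl | rfl
  · exact ⟨1, by simp⟩
  · exact ⟨-1, by simp⟩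

lemma IsIsolatedSPTUnion.foldl_Meas (L : List (Op (Fin N) × ℂ))
    (hL : ∀ p ∈ L,
      ((∃ i : Fin N, p.1 = PZ i) ∨
        (∃ i : ℕ, 2 ≤ i ∧ i ≤ N - 1 ∧ p.1 = GStr N (i - 1) (i + 1))) ∧
      (p.2 = 1 ∨ p.2 = -1))
    {G : Submonoid (Op (Fin N))} (hG : IsIsolatedSPTUnion N G) :
    IsIsolatedSPTUnion N (L.foldl (fun G p => Meas G p.1 p.2) G) := by
  induction L generalizing G with
  | nil => exact hG
  | cons p L ih =>
    obtain ⟨hM, hε⟩ := hL p List.mem_cons_self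
    obtain ⟨u, hu⟩ := exists_units_int_cast_eq hε
    refine ih (fun q hq => hL q (List.mem_cons_of_mem p hq)) ?_
    change IsIsolatedSPTUnion N (Meas G p.1 p.2)
    rcases hM with ⟨i, hi⟩ | ⟨i, h2, hiN, hi⟩
    · rw [hi, ← hu]; exact hG.Meas_PZ i u
    · rw [hi, ← hu]; exact hG.Meas_GStr h2 hiN u

end Invariant

section SPTStabilizers

variable {N : ℕ} {φ : ℕ → ℤˣ}

def adjacentPairOps (N : ℕ) (φ : ℕ → ℤˣ) (A : Finset ℕ) : Set (Op (Fin N)) :=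
  {m | ∃ p ∈ A, ∃ q ∈ A, p < q ∧ (∀ r ∈ A, ¬(p < r ∧ r < q)) ∧ m = pairOp N φ p q}

/-- `g_{p,q} = g_{p,r} g_{r,q}` for a site `r` of the block between `p` and `q`. -/
lemma closure_adjacentPairOps {A : Finset ℕ} (hA : SameParity A) :
    Submonoid.closure (adjacentPairOps N φ A) = pairGroup N φ A := by
  apply le_antisymm
  · rw [Submonoid.closure_le]
    rintro _ ⟨p, hp, q, hq, -, -, rfl⟩
    exact mem_pairGroup hp hq
  have hlt : ∀ d, ∀ p ∈ A, ∀ q ∈ A, p < q → q - p ≤ d →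
      pairOp N φ p q ∈ Submonoid.closure (adjacentPairOps N φ A) := by
    intro d
    induction d with
    | zero => intro p _ q _ hpq hd; omega
    | succ d ih =>
      intro p hp q hq hpq hd
      by_cases hadj : ∀ r ∈ A, ¬(p < r ∧ r < q)
      · exact Submonoid.subset_closure ⟨p, hp, q, hq, hpq, hadj, rfl⟩
      obtain ⟨r, hr, hpr, hrq⟩ : ∃ r ∈ A, p < r ∧ r < q := by simpa using hadj
      rw [← pairOp_mul_pairOp (hA p hp r hr) (hA r hr q hq)]
      exact mul_mem (ih p hp r hr hpr (by omega)) (ih r hr q hq hrq (by omega))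
  refine Submonoid.closure_le.2 (Set.image2_subset_iff.2 fun p hp q hq => ?_)
  rcases lt_trichotomy p q with hpq | rfl | hqp
  · exact hlt _ p hp q hq hpq le_rfl
  · rw [SetLike.mem_coe, pairOp_self]; exact one_mem _
  · rw [SetLike.mem_coe, pairOp_comm (hA p hp q hq)]; exact hlt _ q hq p hp hqp le_rfl

lemma stringOp_injOn {p q p' q' : ℕ} (hpq : p < q) (hp'q' : p' < q') (hp : 1 ≤ p)
    (hq : q ≤ N) (hp' : 1 ≤ p') (hq' : q' ≤ N) (h : stringOp N p q = stringOp N p' q') :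
    p = p' ∧ q = q' := by
  have hS : ∀ {a b : ℕ}, 1 ≤ a → a < b → b ≤ N → ({a, b} : Set ℕ) ⊆ Set.Icc 1 N := by
    intro a b ha hab hb w hw
    rcases hw with rfl | rfl <;> exact ⟨by omega, by omega⟩
  have := ind_injOn (hS hp hpq hq) (hS hp' hp'q' hq') (pauli_injective h).1
  rcases Set.pair_eq_pair_iff.1 this with h' | h' <;> omega

lemma blockZ_injOn {A B : Finset ℕ} (hA : A ⊆ Finset.Icc 1 N) (hB : B ⊆ Finset.Icc 1 N)
    (h : blockZ N A = blockZ N B) : A = B := by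
  have hA' : (A : Set ℕ) ⊆ Set.Icc 1 N := by simpa using Finset.coe_subset.2 hA
  have hB' : (B : Set ℕ) ⊆ Set.Icc 1 N := by simpa using Finset.coe_subset.2 hB
  exact Finset.coe_inj.1 (ind_injOn hA' hB' (pauli_injective h).2)

lemma stringOp_ne_blockZ {p : ℕ} (hp : p ∈ Finset.Icc 1 N) (q : ℕ) (A : Finset ℕ) :
    stringOp N p q ≠ blockZ N A := by
  intro h
  obtain ⟨i, rfl⟩ := exists_lbl_eq hp
  have := congrFun (pauli_injective h).1 i
  simp [ind] at this

lemma exists_sign_stringOp_blockZ (φ : ℕ → ℤˣ) (ζ : Finset ℕ → ℤˣ) :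
    ∃ σ : Op (Fin N) → ℤˣ,
      (∀ p q, 1 ≤ p → p < q → q ≤ N → σ (stringOp N p q) = φ p * φ q) ∧
      ∀ A ⊆ Finset.Icc 1 N, σ (blockZ N A) = ζ A := by
  let f : (ℕ × ℕ) ⊕ Finset ℕ → Op (Fin N) :=
    Sum.elim (fun pq => stringOp N pq.1 pq.2) (blockZ N)
  let S : Set ((ℕ × ℕ) ⊕ Finset ℕ) :=
    {l | Sum.elim (fun pq => 1 ≤ pq.1 ∧ pq.1 < pq.2 ∧ pq.2 ≤ N) (· ⊆ Finset.Icc 1 N) l}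
  have hf : S.InjOn f := by
    rintro (⟨p, q⟩ | A) h₁ (⟨p', q'⟩ | B) h₂ h
    · obtain ⟨rfl, rfl⟩ := stringOp_injOn h₁.2.1 h₂.2.1 h₁.1 h₁.2.2 h₂.1 h₂.2.2 h
      rfl
    · exact absurd h (stringOp_ne_blockZ (Finset.mem_Icc.2 ⟨h₁.1, h₁.2.1.le.trans h₁.2.2⟩) q B)
    · exact absurd h.symm
        (stringOp_ne_blockZ (Finset.mem_Icc.2 ⟨h₂.1, h₂.2.1.le.trans h₂.2.2⟩) q' A)
    · rw [blockZ_injOn h₁ h₂ h]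
  refine ⟨Sum.elim (fun pq => φ pq.1 * φ pq.2) ζ ∘ Function.invFunOn f S, ?_, ?_⟩
  · intro p q hp hpq hq
    exact congrArg _ (hf.leftInvOn_invFunOn (show Sum.inl (p, q) ∈ S from ⟨hp, hpq, hq⟩))
  · intro A hA
    exact congrArg _ (hf.leftInvOn_invFunOn (show Sum.inr A ∈ S from hA))

lemma image_SPTstabs {σ : Op (Fin N) → ℤˣ} {ζ : Finset ℕ → ℤˣ} {A : Finset ℕ}
    (hA : A ⊆ Finset.Icc 1 N)
    (hσ : ∀ p q, 1 ≤ p → p < q → q ≤ N → σ (stringOp N p q) = φ p * φ q)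
    (hζ : σ (blockZ N A) = ζ A) :
    (fun st => ((σ st : ℤ) : ℂ) • st) '' SPTstabs N A =
      insert (ζ A • blockZ N A) (adjacentPairOps N φ A) := by
  have hZ : ((σ (ZProd fun i : Fin N => if lbl i ∈ A then 1 else 0) : ℤ) : ℂ) •
      (ZProd fun i : Fin N => if lbl i ∈ A then 1 else 0) = ζ A • blockZ N A := by
    rw [ZProd_eq_blockZ, hζ, coe_units_smul]
  have hG : ∀ p ∈ A, ∀ q ∈ A, p < q → ((σ (GStr N p q) : ℤ) : ℂ) • GStr N p q =
      pairOp N φ p q := fun p hp q hq hpq => by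
    rw [pairOp_of_lt hpq, GStr_eq_stringOp hpq, hσ p q (Finset.mem_Icc.1 (hA hp)).1 hpq
      (Finset.mem_Icc.1 (hA hq)).2, coe_units_smul]
  ext m
  simp only [SPTstabs, adjacentPairOps, Set.mem_image, Set.mem_insert_iff, Set.mem_ofPred_eq]
  constructor
  · rintro ⟨st, ⟨p, hp, q, hq, hpq, hadj, rfl⟩ | rfl, rfl⟩
    · exact Or.inr ⟨p, hp, q, hq, hpq, hadj, hG p hp q hq hpq⟩
    · exact Or.inl hZ
  · rintro (rfl | ⟨p, hp, q, hq, hpq, hadj, rfl⟩)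
    · exact ⟨_, Or.inr rfl, hZ⟩
    · exact ⟨_, Or.inl ⟨p, hp, q, hq, hpq, hadj, rfl⟩, hG p hp q hq hpq⟩

theorem stabGroup_eq_closure_SPTstabs {P : Finset (Finset ℕ)} (hP : IsParityPartition N P)
    (φ : ℕ → ℤˣ) (ζ : Finset ℕ → ℤˣ) :
    ∃ εf : Op (Fin N) → ℂ, (∀ st, εf st = 1 ∨ εf st = -1) ∧
      stabGroup N P φ ζ =
        Submonoid.closure {m | ∃ A ∈ P, ∃ st ∈ SPTstabs N A, m = εf st • st} := by
  obtain ⟨σ, hσ, hσζ⟩ := exists_sign_stringOp_blockZ (N := N) φ ζ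
  refine ⟨fun st => ((σ st : ℤ) : ℂ), fun st => ?_, ?_⟩
  · rcases Int.units_eq_one_or (σ st) with h | h <;> simp [h]
  have hset : {m | ∃ A ∈ P, ∃ st ∈ SPTstabs N A, m = ((σ st : ℤ) : ℂ) • st} =
      ⋃ A ∈ P, (fun st => ((σ st : ℤ) : ℂ) • st) '' SPTstabs N A := by
    ext m
    simp [eq_comm]
  rw [hset, Submonoid.closure_iUnion]
  refine iSup_congr fun A => ?_
  rw [Submonoid.closure_iUnion]
  refine iSup_congr fun hA => ?_
  rw [image_SPTstabs (hP.subset_Icc hA) hσ (hσζ A (hP.subset_Icc hA)), Set.insert_eq,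
    Submonoid.closure_union, closure_adjacentPairOps (hP.sameParity A hA), blockGroup]

end SPTStabilizers

theorem state_is_union_of_isolated_SPTs_general {N : ℕ}
    (L : List (Op (Fin N) × ℂ))
    (hL : ∀ p ∈ L,
      ((∃ i : Fin N, p.1 = PZ i) ∨
        (∃ i : ℕ, 2 ≤ i ∧ i ≤ N - 1 ∧ p.1 = GStr N (i - 1) (i + 1))) ∧
      (p.2 = 1 ∨ p.2 = -1)) :
    ∀ G : Submonoid (Op (Fin N)),
      G = L.foldl (fun G p => Meas G p.1 p.2)
        (Submonoid.closure (Set.range (PZ : Fin N → Op (Fin N)))) →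
      ∃ P : Finset (Finset ℕ),
        (∀ A ∈ P, A.Nonempty) ∧
        (∀ A ∈ P, A ⊆ Finset.Icc 1 N) ∧
        (∀ x ∈ Finset.Icc 1 N, ∃! A, A ∈ P ∧ x ∈ A) ∧
        (∀ A ∈ P, ∀ x ∈ A, ∀ y ∈ A, x % 2 = y % 2) ∧
        ∃ εf : Op (Fin N) → ℂ, (∀ st, εf st = 1 ∨ εf st = -1) ∧
          G = Submonoid.closure
            {m | ∃ A ∈ P, ∃ st ∈ SPTstabs N A, m = εf st • st} := by
  rintro G rfl
  obtain ⟨P, φ, ζ, hP, hG⟩ := isIsolatedSPTUnion_closure_range_PZ.foldl_Meas L hL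
  obtain ⟨εf, hεf, hεfG⟩ := stabGroup_eq_closure_SPTstabs hP φ ζ
  exact ⟨P, hP.nonempty, fun A => hP.subset_Icc, fun x => hP.existsUnique, hP.sameParity, εf,
    hεf, hG.trans hεfG⟩

/-- (`N` even.)  Let `G` be obtained from `G₀ = ⟨Z 1, …, Z N⟩` by finitely
many measurement-updates of `Z i`'s and cluster stabilizers `g i`, with arbitrary outcome
signs.  Then there is a partition of `{1, …, N}` into blocks of a single parity, and signs
`ε_s ∈ {1, −1}`, such that `G` is generated by `{ε_s • s : s ∈ ⋃_j 𝒮(A_j)}`, where `𝒮(A)`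
is the isolated-SPT stabilizer set of the block `A`. -/
theorem state_is_union_of_isolated_SPTs {N : ℕ} (hN : Even N)
    (L : List (Op (Fin N) × ℂ))
    (hL : ∀ p ∈ L,
      ((∃ i : Fin N, p.1 = PZ i) ∨
        (∃ i : ℕ, 2 ≤ i ∧ i ≤ N - 1 ∧ p.1 = GStr N (i - 1) (i + 1))) ∧
      (p.2 = 1 ∨ p.2 = -1)) :
    ∀ G : Submonoid (Op (Fin N)),
      G = L.foldl (fun G p => Meas G p.1 p.2)
        (Submonoid.closure (Set.range (PZ : Fin N → Op (Fin N)))) →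
      ∃ P : Finset (Finset ℕ),
        (∀ A ∈ P, A.Nonempty) ∧
        (∀ A ∈ P, A ⊆ Finset.Icc 1 N) ∧
        (∀ x ∈ Finset.Icc 1 N, ∃! A, A ∈ P ∧ x ∈ A) ∧
        (∀ A ∈ P, ∀ x ∈ A, ∀ y ∈ A, x % 2 = y % 2) ∧
        ∃ εf : Op (Fin N) → ℂ, (∀ st, εf st = 1 ∨ εf st = -1) ∧
          G = Submonoid.closure
            {m | ∃ A ∈ P, ∃ st ∈ SPTstabs N A, m = εf st • st} :=
  state_is_union_of_isolated_SPTs_general L hL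

end QStab
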